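/- The map a ↦ a³, b ↦ b defines an injective non-surjective endomorphism of the Klein bottle group NS₂ = ⟨a, b | aba⁻¹b⟩; hence NS₂ is not co-Hopfian. -/

import Mathlib

/-- The single defining relator `a b a⁻¹ b` of the Klein bottle group. -/
def kleinRels : Set (FreeGroup (Fin 2)) :=
  {FreeGroup.of 0 * FreeGroup.of 1 * (FreeGroup.of 0)⁻¹ * FreeGroup.of 1}

/-- The Klein bottle group `NS₂ = ⟨a, b ∣ a b a⁻¹ b⟩`. -/
abbrev KleinBottleGroup : Type := PresentedGroup kleinRels

/-! `NS₂` is the semidirect product `ℤ ⋊ ℤ` in which `a` generates the acting factor and acts on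
the normal factor `⟨b⟩` by inversion: the presentation gives a map to this model, and sending
`(m, n)` to `b ^ m * a ^ n` is a left inverse. In the model the endomorphism `a ↦ a³, b ↦ b`
becomes `(m, n) ↦ (m, 3 n)`, which is injective and misses `a = (0, 1)`. -/

open Multiplicative SemidirectProduct

theorem MulAut.zpow_apply_of_apply_eq_inv {G : Type*} [Group G] {f : MulAut G} {y : G}
    (h : f y = y⁻¹) (n : ℤ) : (f ^ n) y = y ^ (n.negOnePow : ℤ) := by
  have h' : f⁻¹ y = y⁻¹ := by
    rw [MulAut.inv_apply, MulEquiv.symm_apply_eq, map_inv, h, inv_inv]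
  induction n using Int.induction_on with
  | zero => simp
  | succ n ih =>
    rw [zpow_add_one, MulAut.mul_apply, h, map_inv, ih, Int.negOnePow_succ, Units.val_neg,
      zpow_neg]
  | pred n ih =>
    rw [zpow_sub_one, MulAut.mul_apply, h', map_inv, ih, Int.negOnePow_sub, Int.negOnePow_one,
      mul_neg, mul_one, Units.val_neg, zpow_neg]

namespace KleinBottleGroup

abbrev a : KleinBottleGroup := PresentedGroup.of 0
abbrev b : KleinBottleGroup := PresentedGroup.of 1

theorem conj_a_b : MulAut.conj a b = b⁻¹ :=
  eq_inv_of_mul_eq_one_left (PresentedGroup.one_of_mem (rels := kleinRels) rfl)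

variable {G : Type*} [Group G] {x y : G}

theorem lift_kleinRels_eq_one (h : x * y * x⁻¹ = y⁻¹) :
    ∀ r ∈ kleinRels, FreeGroup.lift ![x, y] r = 1 := by
  rintro r rfl
  simpa [mul_inv_eq_iff_eq_mul] using mul_eq_one_iff_eq_inv.mpr h

def lift (h : x * y * x⁻¹ = y⁻¹) : KleinBottleGroup →* G :=
  PresentedGroup.toGroup (lift_kleinRels_eq_one h)

@[simp] theorem lift_a (h : x * y * x⁻¹ = y⁻¹) : lift h a = x :=
  PresentedGroup.toGroup.of _
@[simp] theorem lift_b (h : x * y * x⁻¹ = y⁻¹) : lift h b = y :=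
  PresentedGroup.toGroup.of _

theorem hom_ext {f g : KleinBottleGroup →* G} (ha : f a = g a) (hb : f b = g b) : f = g :=
  PresentedGroup.ext fun i ↦ by fin_cases i <;> assumption

end KleinBottleGroup

def invAction : Multiplicative ℤ →* MulAut (Multiplicative ℤ) :=
  zpowersHom _ (MulEquiv.inv _)

theorem invAction_apply (g x : Multiplicative ℤ) :
    invAction g x = x ^ (g.toAdd.negOnePow : ℤ) :=
  MulAut.zpow_apply_of_apply_eq_inv rfl _

theorem invAction_pow_three (g : Multiplicative ℤ) : invAction (g ^ 3) = invAction g := by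
  ext x
  rw [invAction_apply, invAction_apply, toAdd_pow, nsmul_eq_mul, Nat.cast_ofNat,
    show 3 * g.toAdd = 2 * g.toAdd + g.toAdd by ring, Int.negOnePow_add, Int.negOnePow_two_mul,
    one_mul]

abbrev KleinModel := Multiplicative ℤ ⋊[invAction] Multiplicative ℤ

namespace KleinModel

def a : KleinModel := inr (ofAdd 1)
def b : KleinModel := inl (ofAdd 1)

theorem a_mul_b_mul_a_inv : a * b * a⁻¹ = b⁻¹ := by
  rw [a, b, ← map_inv inr, ← inl_aut, ← map_inv]
  rfl

def cube : KleinModel →* KleinModel :=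
  map (MonoidHom.id _) (powMonoidHom 3) fun g ↦ by
    ext
    simp [invAction_pow_three]

@[simp] theorem cube_left (z : KleinModel) : (cube z).left = z.left := rfl
@[simp] theorem cube_right (z : KleinModel) : (cube z).right = z.right ^ 3 := rfl

theorem cube_injective : Function.Injective cube := by
  intro z w h
  have hr := congrArg (toAdd ∘ right) h
  simp only [Function.comp_apply, cube_right, toAdd_pow, nsmul_eq_mul, Nat.cast_ofNat] at hr
  ext
  · simpa using congrArg left h
  · omega

theorem cube_ne_a (z : KleinModel) : cube z ≠ a := by
  intro h
  have hr := congrArg (toAdd ∘ right) h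
  simp only [Function.comp_apply, cube_right, toAdd_pow, nsmul_eq_mul, Nat.cast_ofNat, a,
    right_inr, toAdd_ofAdd] at hr
  omega

end KleinModel

namespace KleinBottleGroup

def toModel : KleinBottleGroup →* KleinModel := lift KleinModel.a_mul_b_mul_a_inv

def ofModel : KleinModel →* KleinBottleGroup :=
  SemidirectProduct.lift (zpowersHom _ b) (zpowersHom _ a) fun g ↦ by
    ext
    simp [invAction_apply, MulAut.zpow_apply_of_apply_eq_inv conj_a_b]

theorem ofModel_comp_toModel : ofModel.comp toModel = MonoidHom.id _ :=
  hom_ext (by simp [ofModel, toModel, KleinModel.a]) (by simp [ofModel, toModel, KleinModel.b])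

theorem toModel_injective : Function.Injective toModel :=
  Function.LeftInverse.injective (g := ofModel) (DFunLike.congr_fun ofModel_comp_toModel)

def cubeA : KleinBottleGroup →* KleinBottleGroup :=
  lift (x := a ^ 3) (y := b) <| by
    rw [← MulAut.conj_apply, map_pow, ← zpow_natCast, MulAut.zpow_apply_of_apply_eq_inv conj_a_b,
      Int.negOnePow_odd _ (by decide)]
    simp

@[simp] theorem cubeA_a : cubeA a = a ^ 3 := lift_a _
@[simp] theorem cubeA_b : cubeA b = b := lift_b _

theorem toModel_comp_cubeA : toModel.comp cubeA = KleinModel.cube.comp toModel :=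
  hom_ext (by simp [toModel, KleinModel.cube, KleinModel.a])
    (by simp [toModel, KleinModel.cube, KleinModel.b])

theorem cubeA_injective : Function.Injective cubeA := by
  have h : Function.Injective (toModel ∘ cubeA) := by
    rw [← MonoidHom.coe_comp, toModel_comp_cubeA, MonoidHom.coe_comp]
    exact KleinModel.cube_injective.comp toModel_injective
  exact h.of_comp

theorem a_notMem_range_cubeA : a ∉ cubeA.range := by
  rintro ⟨x, hx⟩
  apply KleinModel.cube_ne_a (toModel x)
  rw [← MonoidHom.comp_apply, ← toModel_comp_cubeA, MonoidHom.comp_apply, hx, toModel, lift_a]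

end KleinBottleGroup

theorem klein_not_coHopfian :
    (∃ ψ : Monoid.End KleinBottleGroup,
      ψ (PresentedGroup.of 0) = (PresentedGroup.of 0 : KleinBottleGroup) ^ 3 ∧
      ψ (PresentedGroup.of 1) = (PresentedGroup.of 1 : KleinBottleGroup) ∧
      Function.Injective ψ ∧ ¬ Function.Surjective ψ) ∧
    ¬ (∀ ψ : Monoid.End KleinBottleGroup,
        Function.Injective ψ → Function.Surjective ψ) := by
  have not_surjective : ¬ Function.Surjective KleinBottleGroup.cubeA :=
    fun h ↦ KleinBottleGroup.a_notMem_range_cubeA (h _)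
  exact ⟨⟨_, KleinBottleGroup.cubeA_a, KleinBottleGroup.cubeA_b,
      KleinBottleGroup.cubeA_injective, not_surjective⟩,
    fun h ↦ not_surjective (h _ KleinBottleGroup.cubeA_injective)⟩
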